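/- Let d ≥ 3 and let Γ = (V,E) be a d-regular connected finite graph with normalized spectral gap λ₁(Γ) ≥ 1 - 2√(d-1)/d (a Ramanujan graph). Then removing fewer than (d/6 - √(d-1)/3)·|V| edges from Γ leaves a connected component with at least 2|V|/3 vertices. -/

import Mathlib

/-!
If every component of `G'` had fewer than `2n/3` vertices, grouping components would give a
union of components `A` with `n/3 ≤ |A| < 2n/3`, so every edge of `G` between `A` and `Aᶜ` was
removed. The vector equal to `|Aᶜ|` on `A` and `-|A|` on `Aᶜ` has mean zero, hence is orthogonal
to the kernel of the normalized Laplacian (the constants, as `G` is connected), and the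
variational characterisation of `λ₁` gives `d λ₁ |A| |Aᶜ| ≤ n · #(removed edges)`. Since
`|A| |Aᶜ| ≥ 2n²/9` and `d λ₁ ≥ d - 2√(d-1) ≥ 0`, at least `(d - 2√(d-1)) n / 4.5` edges were
removed, more than allowed.
-/

open Finset Matrix Module.End

theorem Finset.exists_subset_sum_mem_Ico {ι : Type*} [DecidableEq ι] (w : ι → ℝ) {k : ℝ}
    (hk : 0 < k) (s : Finset ι) (hs : k ≤ ∑ i ∈ s, w i) (hw : ∀ i ∈ s, w i < 2 * k) :
    ∃ t ⊆ s, k ≤ ∑ i ∈ t, w i ∧ ∑ i ∈ t, w i < 2 * k := by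
  induction s using Finset.induction_on with
  | empty => rw [sum_empty] at hs; linarith
  | insert i s hi ih =>
    rw [sum_insert hi] at hs
    have hwi := hw i (mem_insert_self i s)
    by_cases hks : k ≤ ∑ j ∈ s, w j
    · obtain ⟨t, hts, ht⟩ := ih hks fun j hj => hw j (mem_insert_of_mem hj)
      exact ⟨t, hts.trans (subset_insert i s), ht⟩
    by_cases hki : k ≤ w i
    · exact ⟨{i}, by simp, by simpa using ⟨hki, hwi⟩⟩
    · exact ⟨insert i s, subset_rfl, by rw [sum_insert hi]; constructor <;> linarith⟩

theorem SimpleGraph.exists_union_connectedComponents_card_mem_Ico {V : Type*} [Fintype V]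
    (H : SimpleGraph V) [DecidableRel H.Adj] {k : ℝ} (hk : 0 < k)
    (hkV : k ≤ Fintype.card V) (hH : ∀ c : H.ConnectedComponent, (c.supp.ncard : ℝ) < 2 * k) :
    ∃ A : Finset V, (∀ i j, H.Adj i j → (i ∈ A ↔ j ∈ A)) ∧ k ≤ #A ∧ (#A : ℝ) < 2 * k := by
  classical
  set w : H.ConnectedComponent → ℝ := fun c => #{v | H.connectedComponentMk v = c}
  have hcard (t : Finset H.ConnectedComponent) :
      (#{v | H.connectedComponentMk v ∈ t} : ℝ) = ∑ c ∈ t, w c := by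
    rw [← sum_card_fiberwise_eq_card_filter]; push_cast; rfl
  obtain ⟨t, -, ht⟩ := exists_subset_sum_mem_Ico w hk univ
    (by simpa [← hcard] using hkV)
    (fun c _ => by
      convert hH c using 3
      rw [← Set.ncard_coe_finset]
      congr 1
      ext v
      simp [SimpleGraph.ConnectedComponent.mem_supp_iff])
  refine ⟨({v | H.connectedComponentMk v ∈ t} : Finset V), fun i j hij => ?_, by rwa [hcard]⟩
  simp [SimpleGraph.ConnectedComponent.eq.mpr hij.reachable]

theorem Matrix.IsHermitian.mul_dotProduct_self_le {n : Type*} [Fintype n] [DecidableEq n]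
    {M : Matrix n n ℝ} (hM : M.IsHermitian) {lam : ℝ}
    (hlam : ∀ μ, HasEigenvalue (toLin' M) μ → μ ≠ 0 → lam ≤ μ)
    {f : n → ℝ} (hf : ∀ g, M *ᵥ g = 0 → f ⬝ᵥ g = 0) :
    lam * (f ⬝ᵥ f) ≤ f ⬝ᵥ M *ᵥ f := by
  set b := hM.eigenvectorBasis
  set c : n → ℝ := fun j => b j ⬝ᵥ f
  have parseval (g : n → ℝ) : f ⬝ᵥ g = ∑ j, c j * (b j ⬝ᵥ g) := by
    simpa [EuclideanSpace.inner_eq_star_dotProduct, c, dotProduct_comm f, mul_comm] using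
      (b.sum_inner_mul_inner (WithLp.toLp 2 g) (WithLp.toLp 2 f)).symm
  have hMb (j : n) : b j ⬝ᵥ M *ᵥ f = hM.eigenvalues j * c j := by
    rw [dotProduct_mulVec, ← mulVec_transpose, ← conjTranspose_eq_transpose_of_trivial,
      hM.eq, hM.mulVec_eigenvectorBasis, smul_dotProduct, smul_eq_mul]
  rw [parseval, parseval, mul_sum]
  refine sum_le_sum fun j _ => ?_
  rw [hMb]
  by_cases hμ : hM.eigenvalues j = 0
  · have hcj : c j = 0 := by
      rw [show c j = f ⬝ᵥ b j from dotProduct_comm _ _]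
      exact hf _ (by rw [hM.mulVec_eigenvectorBasis, hμ, zero_smul])
    simp [hcj]
  · have hb0 : (b j : n → ℝ) ≠ 0 := by
      simpa using b.orthonormal.ne_zero j
    have : HasEigenvalue (toLin' M) (hM.eigenvalues j) :=
      hasEigenvalue_of_hasEigenvector ⟨mem_eigenspace_iff.mpr
        (by rw [toLin'_apply, hM.mulVec_eigenvectorBasis]), hb0⟩
    nlinarith [hlam _ this hμ, sq_nonneg (c j)]

theorem Finset.sum_ite_mem_const {V : Type*} [Fintype V] [DecidableEq V] (A : Finset V)
    (x y : ℝ) : ∑ v, (if v ∈ A then x else y) = #A * x + #Aᶜ * y := by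
  rw [sum_ite, filter_mem_eq_inter, filter_notMem_eq_sdiff, univ_inter, ← compl_eq_univ_sdiff]
  simp

namespace SimpleGraph
variable {V : Type*} [Fintype V] [DecidableEq V] {G : SimpleGraph V} [DecidableRel G.Adj] {d : ℕ}

theorem IsRegularOfDegree.one_sub_inv_smul_adjMatrix {R : Type*} [Field R]
    (hG : G.IsRegularOfDegree d) (hd : (d : R) ≠ 0) :
    1 - (d : R)⁻¹ • G.adjMatrix R = (d : R)⁻¹ • G.lapMatrix R := by
  ext i j
  by_cases hij : i = j
  · subst hij; simp [lapMatrix, degMatrix, hG.degree_eq, hd]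
  · simp [lapMatrix, degMatrix, one_apply_ne hij, hij]

variable (G) in
theorem dotProduct_lapMatrix_mulVec_le (G' : SimpleGraph V) [DecidableRel G'.Adj] (f : V → ℝ)
    {c : ℝ} (hc : ∀ i j, G.Adj i j → (f i - f j) ^ 2 ≤ c) (hf : ∀ i j, G'.Adj i j → f i = f j) :
    f ⬝ᵥ G.lapMatrix ℝ *ᵥ f ≤ c * #(G.edgeFinset \ G'.edgeFinset) := by
  have hdeg : ∑ i, ∑ j, (if (G \ G').Adj i j then c else 0) =
      2 * c * #(G.edgeFinset \ G'.edgeFinset) := by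
    simp_rw [← mul_boole _ c, ← mul_sum, ← (G \ G').degree_eq_sum_if_adj, ← Nat.cast_sum]
    rw [sum_degrees_eq_twice_card_edges, ← edgeFinset_sdiff]
    push_cast; ring_nf
    -- the two sides differ only in the `Fintype` instance on `(G \ G').edgeSet`
    congr!
  rw [← toLinearMap₂'_apply', lapMatrix_toLinearMap₂', div_le_iff₀ two_pos, mul_comm, ← mul_assoc,
    ← hdeg]
  refine sum_le_sum fun i _ => sum_le_sum fun j _ => ?_
  by_cases hG : G.Adj i j
  · by_cases hG' : G'.Adj i j
    · simp [hG, hG', hf i j hG']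
    · simp [hG, hG', hc i j hG]
  · simp [hG]

theorem Connected.mul_dotProduct_self_le (hconn : G.Connected) (hG : G.IsRegularOfDegree d)
    (hd : d ≠ 0) {lam : ℝ}
    (hlam : ∀ μ, HasEigenvalue (toLin' (1 - (d : ℝ)⁻¹ • G.adjMatrix ℝ)) μ → μ ≠ 0 → lam ≤ μ)
    {f : V → ℝ} (hf : ∑ v, f v = 0) :
    d * lam * (f ⬝ᵥ f) ≤ f ⬝ᵥ G.lapMatrix ℝ *ᵥ f := by
  have hdR : (d : ℝ) ≠ 0 := Nat.cast_ne_zero.mpr hd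
  rw [hG.one_sub_inv_smul_adjMatrix hdR] at hlam
  have hM : ((d : ℝ)⁻¹ • G.lapMatrix ℝ).IsHermitian :=
    (isHermitian_lapMatrix ℝ G).smul (IsSelfAdjoint.all _)
  have hker (g : V → ℝ) (hg : ((d : ℝ)⁻¹ • G.lapMatrix ℝ) *ᵥ g = 0) : f ⬝ᵥ g = 0 := by
    rw [smul_mulVec, smul_eq_zero, lapMatrix_mulVec_eq_zero_iff_forall_reachable] at hg
    obtain ⟨v₀⟩ := hconn.nonempty
    have hconst : g = fun _ => g v₀ :=
      funext fun v => (hg.resolve_left (inv_ne_zero hdR)) v v₀ (hconn.preconnected v v₀)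
    rw [hconst]
    simp [dotProduct, ← sum_mul, hf]
  have := hM.mul_dotProduct_self_le hlam hker
  rw [smul_mulVec, dotProduct_smul, smul_eq_mul, le_inv_mul_iff₀ (by positivity)] at this
  linarith

theorem Connected.mul_card_mul_card_compl_le (hconn : G.Connected) (hG : G.IsRegularOfDegree d)
    (hd : d ≠ 0) {lam : ℝ}
    (hlam : ∀ μ, HasEigenvalue (toLin' (1 - (d : ℝ)⁻¹ • G.adjMatrix ℝ)) μ → μ ≠ 0 → lam ≤ μ)
    (G' : SimpleGraph V) [DecidableRel G'.Adj] (A : Finset V)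
    (hA : ∀ i j, G'.Adj i j → (i ∈ A ↔ j ∈ A)) :
    d * lam * (#A * #Aᶜ) ≤ Fintype.card V * #(G.edgeFinset \ G'.edgeFinset) := by
  set n : ℝ := (Fintype.card V : ℝ)
  set f : V → ℝ := fun v => if v ∈ A then (#Aᶜ : ℝ) else -#A
  have hn : (#A : ℝ) + #Aᶜ = n := by rw [← Nat.cast_add, card_add_card_compl]
  have hsum : ∑ v, f v = 0 := by
    rw [sum_ite_mem_const]; ring
  have hnorm : f ⬝ᵥ f = #A * #Aᶜ * n := by
    calc f ⬝ᵥ f = ∑ v, if v ∈ A then (#Aᶜ : ℝ) ^ 2 else (#A : ℝ) ^ 2 :=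
          sum_congr rfl fun v _ => by by_cases hv : v ∈ A <;> simp [f, hv, sq]
      _ = #A * #Aᶜ * n := by rw [sum_ite_mem_const, ← hn]; ring
  have hcut := G.dotProduct_lapMatrix_mulVec_le G' f (c := n ^ 2)
    (fun i j _ => by
      by_cases hi : i ∈ A <;> by_cases hj : j ∈ A <;> simp [f, hi, hj, ← hn] <;> nlinarith)
    (fun i j hij => by simp [f, hA i j hij])
  have hray := hconn.mul_dotProduct_self_le hG hd hlam hsum
  have hn0 : 0 < n := Nat.cast_pos.mpr (Fintype.card_pos_iff.mpr hconn.nonempty)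
  refine le_of_mul_le_mul_right ?_ hn0
  calc d * lam * (#A * #Aᶜ) * n = d * lam * (f ⬝ᵥ f) := by rw [hnorm]; ring
    _ ≤ f ⬝ᵥ G.lapMatrix ℝ *ᵥ f := hray
    _ ≤ n ^ 2 * #(G.edgeFinset \ G'.edgeFinset) := hcut
    _ = n * #(G.edgeFinset \ G'.edgeFinset) * n := by ring
end SimpleGraph

theorem Real.two_mul_sqrt_sub_one_le {x : ℝ} (hx : 0 ≤ x) : 2 * √(x - 1) ≤ x := by
  have : √(x - 1) ≤ x / 2 := Real.sqrt_le_iff.mpr ⟨by positivity, by nlinarith [sq_nonneg (x - 2)]⟩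
  linarith

theorem stmt10_general {V : Type*} [Fintype V] [DecidableEq V]
    (G : SimpleGraph V) [DecidableRel G.Adj] (hconn : G.Connected)
    (d : ℕ) (hd : 3 ≤ d) (hreg : G.IsRegularOfDegree d)
    (lam : ℝ)
    (hmin : ∀ μ : ℝ, Module.End.HasEigenvalue
      (Matrix.toLin' ((1 : Matrix V V ℝ) - (d : ℝ)⁻¹ • G.adjMatrix ℝ)) μ → μ ≠ 0 → lam ≤ μ)
    (hram : 1 - 2 * Real.sqrt (d - 1) / d ≤ lam)
    (G' : SimpleGraph V) [DecidableRel G'.Adj]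
    (hrem : (((G.edgeFinset \ G'.edgeFinset).card : ℝ)) <
      ((d : ℝ) / 6 - Real.sqrt (d - 1) / 3) * Fintype.card V) :
    ∃ K : G'.ConnectedComponent, (2 * (Fintype.card V : ℝ)) / 3 ≤ (K.supp.ncard : ℝ) := by
  by_contra! hsmall
  set n : ℝ := (Fintype.card V : ℝ)
  set s := √((d : ℝ) - 1)
  have hd₀ : d ≠ 0 := by omega
  have hdR : (0 : ℝ) < d := Nat.cast_pos.mpr (Nat.pos_of_ne_zero hd₀)
  have hn : 0 < n := Nat.cast_pos.mpr (Fintype.card_pos_iff.mpr hconn.nonempty)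
  obtain ⟨A, hA, hA₁, hA₂⟩ := G'.exists_union_connectedComponents_card_mem_Ico (k := n / 3)
    (by positivity) (by linarith) fun c => by linarith [hsmall c]
  have hcut := hconn.mul_card_mul_card_compl_le hreg hd₀ hmin G' A hA
  have hAc : (#Aᶜ : ℝ) = n - #A := by rw [card_compl, Nat.cast_sub (card_le_univ A)]
  have hgap : 0 ≤ d - 2 * s := by linarith [Real.two_mul_sqrt_sub_one_le hdR.le]
  have hlam : d - 2 * s ≤ d * lam := by
    have := mul_le_mul_of_nonneg_left hram hdR.le
    rwa [mul_sub, mul_one, mul_div_cancel₀ _ hdR.ne'] at this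
  have hbal : 2 * n ^ 2 / 9 ≤ #A * #Aᶜ := by rw [hAc]; nlinarith
  have : (d - 2 * s) * (2 * n ^ 2 / 9) < (d - 2 * s) * n ^ 2 / 6 :=
    calc (d - 2 * s) * (2 * n ^ 2 / 9) ≤ d * lam * (#A * #Aᶜ) :=
          mul_le_mul hlam hbal (by positivity) (by linarith)
      _ ≤ n * #(G.edgeFinset \ G'.edgeFinset) := hcut
      _ < n * ((d / 6 - s / 3) * n) := mul_lt_mul_of_pos_left hrem hn
      _ = (d - 2 * s) * n ^ 2 / 6 := by ring
  nlinarith [mul_nonneg hgap (sq_nonneg n)]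

/-- For a `d`-regular Ramanujan graph (`d ≥ 3`, normalized spectral gap
`lam ≥ 1 - 2√(d-1)/d`), removing fewer than `(d/6 - √(d-1)/3)·|V|` edges leaves
a connected component with at least `2|V|/3` vertices. -/
theorem stmt10 {V : Type*} [Fintype V] [DecidableEq V]
    (G : SimpleGraph V) [DecidableRel G.Adj] (hconn : G.Connected)
    (d : ℕ) (hd : 3 ≤ d) (hreg : G.IsRegularOfDegree d)
    (lam : ℝ)
    (heig : Module.End.HasEigenvalue
      (Matrix.toLin' ((1 : Matrix V V ℝ) - (d : ℝ)⁻¹ • G.adjMatrix ℝ)) lam)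
    (hne : lam ≠ 0)
    (hmin : ∀ μ : ℝ, Module.End.HasEigenvalue
      (Matrix.toLin' ((1 : Matrix V V ℝ) - (d : ℝ)⁻¹ • G.adjMatrix ℝ)) μ → μ ≠ 0 → lam ≤ μ)
    (hram : 1 - 2 * Real.sqrt (d - 1) / d ≤ lam)
    (G' : SimpleGraph V) [DecidableRel G'.Adj] (hle : G' ≤ G)
    (hrem : (((G.edgeFinset \ G'.edgeFinset).card : ℝ)) <
      ((d : ℝ) / 6 - Real.sqrt (d - 1) / 3) * Fintype.card V) :
    ∃ K : G'.ConnectedComponent, (2 * (Fintype.card V : ℝ)) / 3 ≤ (K.supp.ncard : ℝ) :=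
  stmt10_general G hconn d hd hreg lam hmin hram G' hrem
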